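/- If p is a quadratic real polynomial p(t) = at² + bt + c with no real roots (b² - 4ac < 0, a > 0) and complex roots ω, ω̄, then ∫₀¹ t^h / p(t) dt equals Res(w^h(log(1-1/w) + ∑_{k=1}^h 1/(kw^k))/p(w), ω) + Res(..., ω̄), and this sum is real. -/

import Mathlib

/-!
Since `p = a (t - ω) (t - ω̄)`, partial fractions give
`1 / p(t) = (1 / (t - ω) - 1 / (t - ω̄)) / (a (ω - ω̄))`. From
`tʰ⁺¹ / (t - ω) = ω · tʰ / (t - ω) + tʰ` one gets by induction on `h` that
`∫₀¹ tʰ / (t - ω) dt = ωʰ (log (1 - 1/ω) + ∑_{k=1}^h 1 / (k ωᵏ))`, and divided by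
`a (ω - ω̄) = p'(ω)` this is the residue at the simple pole `ω`. The residue at `ω̄` is its
complex conjugate, because `1 - 1/ω` stays off the branch cut of `log`; so the sum is real.
-/

open Real Finset intervalIntegral

/-- The residue of `f` at `ω`, as the limit of circle integrals of shrinking radius. -/
noncomputable def residue (f : ℂ → ℂ) (ω : ℂ) : ℂ :=
  Filter.limUnder (nhdsWithin 0 (Set.Ioi (0 : ℝ)))
    (fun r : ℝ => (2 * Real.pi * Complex.I)⁻¹ * ∮ z in C(ω, r), f z)

open Metric Filter Topology ComplexConjugate MeasureTheory

theorem residue_eq_of_eventuallyEq_inv_sub_mul {f F : ℂ → ℂ} {ω : ℂ}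
    (hF : ∀ᶠ z in 𝓝 ω, DifferentiableAt ℂ F z)
    (hf : ∀ᶠ z in 𝓝[≠] ω, f z = (z - ω)⁻¹ * F z) :
    residue f ω = F ω := by
  rw [eventually_nhdsWithin_iff] at hf
  obtain ⟨R, hR, hball⟩ := nhds_basis_closedBall.eventually_iff.mp (hF.and hf)
  have hcircle : ∀ r ∈ Set.Ioc (0 : ℝ) R,
      (2 * π * Complex.I)⁻¹ * (∮ z in C(ω, r), f z) = F ω := by
    intro r ⟨hr0, hrR⟩
    have hsub : closedBall ω r ⊆ closedBall ω R := closedBall_subset_closedBall hrR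
    have hcongr : (∮ z in C(ω, r), f z) = ∮ z in C(ω, r), (z - ω)⁻¹ • F z := by
      refine circleIntegral.integral_congr hr0.le fun z hz => ?_
      have hzω : z ≠ ω := ne_of_mem_sphere hz hr0.ne'
      exact (hball (hsub (sphere_subset_closedBall hz))).2 hzω
    have hF' : DifferentiableOn ℂ F (closedBall ω r) :=
      fun z hz => (hball (hsub hz)).1.differentiableWithinAt
    rw [hcongr, hF'.circleIntegral_sub_inv_smul (mem_ball_self hr0), smul_eq_mul,
      inv_mul_cancel_left₀ (by simp [pi_ne_zero])]
  refine Tendsto.limUnder_eq (tendsto_const_nhds.congr' ?_)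
  filter_upwards [Ioc_mem_nhdsGT hR] with r hr using (hcircle r hr).symm

theorem residue_div_mul_sub_mul_sub {g : ℂ → ℂ} {a ω ω' : ℂ} (ha : a ≠ 0) (hω : ω ≠ ω')
    (hg : ∀ᶠ z in 𝓝 ω, DifferentiableAt ℂ g z) :
    residue (fun z => g z / (a * (z - ω) * (z - ω'))) ω = g ω / (a * (ω - ω')) := by
  have hne : ∀ᶠ z in 𝓝 ω, z - ω' ≠ 0 :=
    (continuous_id.sub continuous_const).continuousAt.eventually_ne (sub_ne_zero.mpr hω)
  refine residue_eq_of_eventuallyEq_inv_sub_mul (F := fun z => g z / (a * (z - ω'))) ?_ ?_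
  · filter_upwards [hg, hne] with z hgz hz
    exact hgz.div (by fun_prop) (mul_ne_zero ha hz)
  · filter_upwards [self_mem_nhdsWithin, nhdsWithin_le_nhds hne] with z hzω hz
    have hzω' : z - ω ≠ 0 := sub_ne_zero.mpr hzω
    field_simp

theorem one_sub_ofReal_div_mem_slitPlane {ω : ℂ} (hω : ω.im ≠ 0) {t : ℝ} (ht : 0 ≤ t) :
    1 - t / ω ∈ Complex.slitPlane := by
  rcases ht.eq_or_lt with rfl | ht
  · simp
  · have hω0 : ω ≠ 0 := fun h => hω (by simp [h])
    refine Or.inr ?_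
    simp [Complex.div_im, hω, ht.ne', hω0]

theorem one_sub_inv_mem_slitPlane {ω : ℂ} (hω : ω.im ≠ 0) : 1 - 1 / ω ∈ Complex.slitPlane := by
  simpa using one_sub_ofReal_div_mem_slitPlane hω zero_le_one

/-- For `‖w‖ > 1` this is `-∑_{k > h} 1 / (k wᵏ)`, the tail of the series of `log (1 - 1 / w)`. -/
noncomputable def logRemainder (h : ℕ) (w : ℂ) : ℂ :=
  Complex.log (1 - 1 / w) + ∑ k ∈ Finset.Icc 1 h, 1 / (k * w ^ k)

theorem logRemainder_zero (w : ℂ) : logRemainder 0 w = Complex.log (1 - 1 / w) := by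
  simp [logRemainder]

theorem pow_succ_mul_logRemainder_succ {w : ℂ} (hw : w ≠ 0) (h : ℕ) :
    w ^ (h + 1) * logRemainder (h + 1) w = w * (w ^ h * logRemainder h w) + 1 / (h + 1) := by
  simp only [logRemainder, sum_Icc_succ_top (Nat.le_add_left 1 h)]
  push_cast
  field_simp
  ring

theorem differentiableAt_logRemainder {w : ℂ} (hw : w.im ≠ 0) (h : ℕ) :
    DifferentiableAt ℂ (logRemainder h) w := by
  have hw0 : w ≠ 0 := fun hw0 => hw (by simp [hw0])
  unfold logRemainder
  refine DifferentiableAt.add ?_ (DifferentiableAt.fun_sum fun k hk => ?_)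
  · exact (Complex.differentiableAt_log (one_sub_inv_mem_slitPlane hw)).comp w
      (by fun_prop (disch := exact hw0) : DifferentiableAt ℂ (fun z => 1 - 1 / z) w)
  · have hk : (k : ℂ) ≠ 0 := Nat.cast_ne_zero.mpr (by grind)
    fun_prop (disch := simp [hk, hw0])

theorem conj_logRemainder {w : ℂ} (hw : w.im ≠ 0) (h : ℕ) :
    conj (logRemainder h w) = logRemainder h (conj w) := by
  simp only [logRemainder, map_add, map_sum]
  rw [← Complex.log_conj _ (Complex.slitPlane_arg_ne_pi (one_sub_inv_mem_slitPlane hw))]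
  simp

theorem ofReal_sub_ne_zero {ω : ℂ} (hω : ω.im ≠ 0) (t : ℝ) : (t : ℂ) - ω ≠ 0 :=
  fun h => hω (by simpa using congrArg Complex.im h)

theorem continuous_pow_div_ofReal_sub {ω : ℂ} (hω : ω.im ≠ 0) (h : ℕ) :
    Continuous fun t : ℝ => (t : ℂ) ^ h / (t - ω) :=
  (by fun_prop : Continuous fun t : ℝ => (t : ℂ) ^ h).div (by fun_prop) (ofReal_sub_ne_zero hω)

theorem integral_inv_ofReal_sub {ω : ℂ} (hω : ω.im ≠ 0) :
    ∫ t in (0 : ℝ)..1, ((t : ℂ) - ω)⁻¹ = Complex.log (1 - 1 / ω) := by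
  have hω0 : ω ≠ 0 := fun hω0 => hω (by simp [hω0])
  have hderiv : ∀ t ∈ Set.uIcc (0 : ℝ) 1,
      HasDerivAt (fun s : ℝ => Complex.log (1 - s / ω)) ((t : ℂ) - ω)⁻¹ t := by
    intro t ht
    rw [Set.uIcc_of_le zero_le_one] at ht
    have hlog := ((Complex.hasDerivAt_log (one_sub_ofReal_div_mem_slitPlane hω ht.1)).comp
      (t : ℂ) (((hasDerivAt_id (t : ℂ)).div_const ω).const_sub 1)).comp_ofReal
    refine hlog.congr_deriv ?_
    rw [one_sub_div hω0, inv_div, ← neg_sub, div_neg]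
    field_simp
  have hint : IntervalIntegrable (fun t : ℝ => ((t : ℂ) - ω)⁻¹) volume 0 1 := by
    simpa using (continuous_pow_div_ofReal_sub hω 0).intervalIntegrable 0 1
  rw [integral_eq_sub_of_hasDerivAt hderiv hint]
  simp

theorem integral_pow_succ_div_ofReal_sub {ω : ℂ} (hω : ω.im ≠ 0) (h : ℕ) :
    ∫ t in (0 : ℝ)..1, (t : ℂ) ^ (h + 1) / (t - ω) =
      ω * (∫ t in (0 : ℝ)..1, (t : ℂ) ^ h / (t - ω)) + 1 / (h + 1) := by
  have hsplit : ∀ t : ℝ, (t : ℂ) ^ (h + 1) / (t - ω) = ω * ((t : ℂ) ^ h / (t - ω)) + (t : ℂ) ^ h :=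
    fun t => by
      have htω := ofReal_sub_ne_zero hω t
      field_simp
      ring
  have hpow : ∫ t in (0 : ℝ)..1, (t : ℂ) ^ h = 1 / (h + 1) := by
    simp only [← Complex.ofReal_pow, integral_ofReal, integral_pow]
    simp
  have hint : IntervalIntegrable (fun t : ℝ => ω * ((t : ℂ) ^ h / (t - ω))) volume 0 1 :=
    ((continuous_pow_div_ofReal_sub hω h).const_mul ω).intervalIntegrable 0 1
  have hint_pow : IntervalIntegrable (fun t : ℝ => (t : ℂ) ^ h) volume 0 1 :=
    (by fun_prop : Continuous fun t : ℝ => (t : ℂ) ^ h).intervalIntegrable 0 1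
  rw [integral_congr fun t _ => hsplit t, integral_add hint hint_pow,
    intervalIntegral.integral_const_mul, hpow]

theorem integral_pow_div_ofReal_sub {ω : ℂ} (hω : ω.im ≠ 0) (h : ℕ) :
    ∫ t in (0 : ℝ)..1, (t : ℂ) ^ h / (t - ω) = ω ^ h * logRemainder h ω := by
  have hω0 : ω ≠ 0 := fun hω0 => hω (by simp [hω0])
  induction h with
  | zero => simp [integral_inv_ofReal_sub hω, logRemainder_zero]
  | succ h ih =>
    rw [integral_pow_succ_div_ofReal_sub hω, ih, pow_succ_mul_logRemainder_succ hω0]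

theorem integral_pow_div_mul_sub_mul_sub {a ω ω' : ℂ} (ha : a ≠ 0) (hω : ω.im ≠ 0)
    (hω' : ω'.im ≠ 0) (hne : ω ≠ ω') (h : ℕ) :
    ∫ t in (0 : ℝ)..1, (t : ℂ) ^ h / (a * (t - ω) * (t - ω')) =
      ω ^ h * logRemainder h ω / (a * (ω - ω')) +
        ω' ^ h * logRemainder h ω' / (a * (ω' - ω)) := by
  have hsub : ω - ω' ≠ 0 := sub_ne_zero.mpr hne
  have hpartial : ∀ t : ℝ, (t : ℂ) ^ h / (a * (t - ω) * (t - ω')) =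
      (a * (ω - ω'))⁻¹ * ((t : ℂ) ^ h / (t - ω) - (t : ℂ) ^ h / (t - ω')) := fun t => by
    have htω := ofReal_sub_ne_zero hω t
    have htω' := ofReal_sub_ne_zero hω' t
    field_simp
    ring
  rw [integral_congr fun t _ => hpartial t, intervalIntegral.integral_const_mul,
    integral_sub ((continuous_pow_div_ofReal_sub hω h).intervalIntegrable 0 1)
      ((continuous_pow_div_ofReal_sub hω' h).intervalIntegrable 0 1),
    integral_pow_div_ofReal_sub hω, integral_pow_div_ofReal_sub hω']
  rw [← neg_sub ω ω']
  field_simp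
  ring

theorem quadratic_eq_mul_sub_mul_sub_conj {a b c : ℝ} {ω : ℂ} (hω : ω.im ≠ 0)
    (hroot : (a : ℂ) * ω ^ 2 + b * ω + c = 0) (w : ℂ) :
    (a : ℂ) * w ^ 2 + b * w + c = a * (w - ω) * (w - conj ω) := by
  have hconj : (a : ℂ) * conj ω ^ 2 + b * conj ω + c = 0 := by
    simpa using congrArg conj hroot
  have hsub : ω - conj ω ≠ 0 := sub_ne_zero.mpr fun h => hω (Complex.conj_eq_iff_im.mp h.symm)
  have hsum : (a : ℂ) * (ω + conj ω) + b = 0 := by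
    refine (mul_eq_zero.mp ?_).resolve_right hsub
    linear_combination hroot - hconj
  linear_combination (w - ω) * hsum + hroot

theorem eventually_differentiableAt_pow_mul_logRemainder {ω : ℂ} (hω : ω.im ≠ 0) (h : ℕ) :
    ∀ᶠ w in 𝓝 ω, DifferentiableAt ℂ (fun w => w ^ h * logRemainder h w) w := by
  filter_upwards [Complex.continuous_im.continuousAt.eventually_ne hω] with w hw
  exact (differentiableAt_pow h).mul (differentiableAt_logRemainder hw h)

theorem integral_quadratic_residues_general (a b c : ℝ) (ha : 0 < a)
    (ω : ℂ) (hω : ω.im ≠ 0)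
    (hroot : (a : ℂ) * ω ^ 2 + (b : ℂ) * ω + (c : ℂ) = 0) (h : ℕ) :
    (∫ t in (0 : ℝ)..1, (t : ℂ) ^ h / ((a : ℂ) * (t : ℂ) ^ 2 + (b : ℂ) * t + (c : ℂ))) =
      residue
        (fun w => w ^ h * (Complex.log (1 - 1 / w) +
            ∑ k ∈ Finset.Icc 1 h, 1 / (k * w ^ k)) /
          ((a : ℂ) * w ^ 2 + (b : ℂ) * w + (c : ℂ))) ω +
      residue
        (fun w => w ^ h * (Complex.log (1 - 1 / w) +
            ∑ k ∈ Finset.Icc 1 h, 1 / (k * w ^ k)) /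
          ((a : ℂ) * w ^ 2 + (b : ℂ) * w + (c : ℂ))) (starRingEnd ℂ ω) ∧
    (residue
        (fun w => w ^ h * (Complex.log (1 - 1 / w) +
            ∑ k ∈ Finset.Icc 1 h, 1 / (k * w ^ k)) /
          ((a : ℂ) * w ^ 2 + (b : ℂ) * w + (c : ℂ))) ω +
      residue
        (fun w => w ^ h * (Complex.log (1 - 1 / w) +
            ∑ k ∈ Finset.Icc 1 h, 1 / (k * w ^ k)) /
          ((a : ℂ) * w ^ 2 + (b : ℂ) * w + (c : ℂ))) (starRingEnd ℂ ω)).im = 0 := by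
  have ha' : (a : ℂ) ≠ 0 := Complex.ofReal_ne_zero.mpr ha.ne'
  have hω' : (conj ω).im ≠ 0 := by simpa using hω
  have hne : ω ≠ conj ω := fun h => hω (Complex.conj_eq_iff_im.mp h.symm)
  have hp := quadratic_eq_mul_sub_mul_sub_conj hω hroot
  set ρ := ω ^ h * logRemainder h ω / (a * (ω - conj ω))
  have hconj : conj ρ = conj ω ^ h * logRemainder h (conj ω) / (a * (conj ω - ω)) := by
    simp [ρ, conj_logRemainder hω]
  have hres : residue (fun w => w ^ h * logRemainder h w / (a * w ^ 2 + b * w + c)) ω = ρ := by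
    simp only [hp]
    exact residue_div_mul_sub_mul_sub ha' hne
      (eventually_differentiableAt_pow_mul_logRemainder hω h)
  have hres' : residue (fun w => w ^ h * logRemainder h w / (a * w ^ 2 + b * w + c)) (conj ω) =
      conj ρ := by
    simp only [hp, mul_right_comm _ (_ - ω), hconj]
    exact residue_div_mul_sub_mul_sub ha' hne.symm
      (eventually_differentiableAt_pow_mul_logRemainder hω' h)
  have hint : ∫ t in (0 : ℝ)..1, (t : ℂ) ^ h / (a * (t : ℂ) ^ 2 + b * t + c) = ρ + conj ρ := by
    simp only [hp, hconj]
    exact integral_pow_div_mul_sub_mul_sub ha' hω hω' hne h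
  unfold logRemainder at hres hres'
  rw [hint, hres, hres', Complex.add_conj]
  exact ⟨rfl, Complex.ofReal_im _⟩

/-- For p(t) = at² + bt + c with b² - 4ac < 0, a > 0, and nonreal root ω (so p = a(t-ω)(t-ω̄)),
∫₀¹ tʰ/p(t) dt equals the sum of the residues at ω and ω̄ of
w ↦ wʰ(log(1-1/w) + ∑_{k=1}^h 1/(k wᵏ))/p(w), and this sum is real. -/
theorem integral_quadratic_residues (a b c : ℝ) (ha : 0 < a)
    (hdisc : b ^ 2 - 4 * a * c < 0) (ω : ℂ) (hω : ω.im ≠ 0)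
    (hroot : (a : ℂ) * ω ^ 2 + (b : ℂ) * ω + (c : ℂ) = 0) (h : ℕ) :
    (∫ t in (0 : ℝ)..1, (t : ℂ) ^ h / ((a : ℂ) * (t : ℂ) ^ 2 + (b : ℂ) * t + (c : ℂ))) =
      residue
        (fun w => w ^ h * (Complex.log (1 - 1 / w) +
            ∑ k ∈ Finset.Icc 1 h, 1 / (k * w ^ k)) /
          ((a : ℂ) * w ^ 2 + (b : ℂ) * w + (c : ℂ))) ω +
      residue
        (fun w => w ^ h * (Complex.log (1 - 1 / w) +
            ∑ k ∈ Finset.Icc 1 h, 1 / (k * w ^ k)) /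
          ((a : ℂ) * w ^ 2 + (b : ℂ) * w + (c : ℂ))) (starRingEnd ℂ ω) ∧
    (residue
        (fun w => w ^ h * (Complex.log (1 - 1 / w) +
            ∑ k ∈ Finset.Icc 1 h, 1 / (k * w ^ k)) /
          ((a : ℂ) * w ^ 2 + (b : ℂ) * w + (c : ℂ))) ω +
      residue
        (fun w => w ^ h * (Complex.log (1 - 1 / w) +
            ∑ k ∈ Finset.Icc 1 h, 1 / (k * w ^ k)) /
          ((a : ℂ) * w ^ 2 + (b : ℂ) * w + (c : ℂ))) (starRingEnd ℂ ω)).im = 0 :=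
  integral_quadratic_residues_general a b c ha ω hω hroot h
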